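/- Let p be a complex polynomial of degree N ≥ 1 and let σ₀ ∈ ℂ be such that the polynomial e^{−σ₀D²/2}p has N distinct roots. Then there exist r > 0 and holomorphic functions z₁, …, z_N : B(σ₀,r) → ℂ such that for every τ ∈ B(σ₀,r): the z_j(τ) are pairwise distinct and are exactly the roots of e^{−τD²/2}p; each z_j satisfies the differential equation z_j′(τ) = ∑_{k ≠ j} 1/(z_j(τ) − z_k(τ)); and consequently z_j″(τ) = −2·∑_{k ≠ j} 1/(z_j(τ) − z_k(τ))³ (the rational Calogero–Moser equations). -/

import Mathlib

open Filter Metric Set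

noncomputable section

/-- The heat flow `e^{-τD²/2}p` of a polynomial `p`: the finite sum
`∑_k (1/k!) (-τ/2)^k p^{(2k)}`. -/
def polyHeatFlow (p : Polynomial ℂ) (τ : ℂ) : Polynomial ℂ :=
  ∑ k ∈ Finset.range (p.natDegree + 1),
    Polynomial.C ((1 / (k.factorial : ℂ)) * (-τ / 2) ^ k) * (Polynomial.derivative^[2 * k] p)

/-!
`u(τ, z) = (e^{-τD²/2}p)(z)` solves `∂_τ u = -½ ∂_z² u`, and `e^{-τD²/2}p` has the degree of `p`.
By the implicit function theorem each simple root `z_j(τ)` moves holomorphically, with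
`z_j' = -∂_τ u / ∂_z u = ½ u''(z_j) / u'(z_j) = ∑_{k ≠ j} 1/(z_j - z_k)`, the last step being the
logarithmic derivative of `∏_k (z - z_k)`. Differentiating again, the terms of
`∑_{k ≠ j} (z_j' - z_k') / (z_j - z_k)²` involving a third root `z_l` combine into
`1/((z_j - z_k)(z_j - z_l)(z_k - z_l))`, antisymmetric in `(k, l)`, so they cancel and leave
`2 ∑_{k ≠ j} 1/(z_j - z_k)³`.
-/

open Function Topology Polynomial Finset Lagrange

theorem hasDerivAt_of_eventually_eq_zero {𝕜 : Type*} [NontriviallyNormedField 𝕜]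
    {f : 𝕜 × 𝕜 → 𝕜} {g : 𝕜 → 𝕜} {x a b : 𝕜} (hf : DifferentiableAt 𝕜 f (x, g x))
    (ha : HasDerivAt (fun t => f (t, g x)) a x) (hb : HasDerivAt (fun y => f (x, y)) b (g x))
    (hb0 : b ≠ 0) (hg : DifferentiableAt 𝕜 g x) (hzero : ∀ᶠ t in 𝓝 x, f (t, g t) = 0) :
    HasDerivAt g (-a / b) x := by
  set L := fderiv 𝕜 f (x, g x)
  have hL := hf.hasFDerivAt
  have ha' : a = L (1, 0) :=
    ha.unique (hL.comp_hasDerivAt x ((hasDerivAt_id x).prodMk (hasDerivAt_const x (g x))))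
  have hb' : b = L (0, 1) :=
    hb.unique (hL.comp_hasDerivAt (f := fun y => (x, y)) (g x)
      ((hasDerivAt_const (g x) x).prodMk (hasDerivAt_id (g x))))
  have hchain : L (1, deriv g x) = 0 :=
    (hL.comp_hasDerivAt x ((hasDerivAt_id x).prodMk hg.hasDerivAt)).unique
      ((hasDerivAt_const x 0).congr_of_eventuallyEq hzero)
  have hsplit : L (1, deriv g x) = a + deriv g x * b := by
    rw [ha', hb', ← smul_eq_mul, ← L.map_smul, ← L.map_add, Prod.smul_mk, Prod.mk_add_mk]
    simp
  rw [show -a / b = deriv g x by field_simp; linear_combination -(hsplit.symm.trans hchain)]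
  exact hg.hasDerivAt

theorem ContDiffAt.exists_eventually_eq_zero {𝕜 : Type*} [RCLike 𝕜] {f : 𝕜 × 𝕜 → 𝕜}
    {u : 𝕜 × 𝕜} (hf : ContDiffAt 𝕜 1 f u) (hfu : f u = 0)
    (hb : deriv (fun y => f (u.1, y)) u.2 ≠ 0) :
    ∃ g : 𝕜 → 𝕜, g u.1 = u.2 ∧ ∀ᶠ x in 𝓝 u.1, DifferentiableAt 𝕜 g x ∧ f (x, g x) = 0 := by
  have hinv : (fderiv 𝕜 f u ∘L .inr 𝕜 𝕜 𝕜).IsInvertible := by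
    set L := fderiv 𝕜 f u
    have hL : deriv (fun y => f (u.1, y)) u.2 = L (0, 1) :=
      ((hf.differentiableAt one_ne_zero).hasFDerivAt.comp_hasDerivAt (f := fun y => (u.1, y)) u.2
        ((hasDerivAt_const _ _).prodMk (hasDerivAt_id _))).deriv
    rw [hL] at hb
    refine .of_inverse (g := (L (0, 1))⁻¹ • .id 𝕜 𝕜) ?_ ?_ <;> ext <;> simp [hb]
  refine ⟨hf.implicitFunction one_ne_zero hinv, hf.implicitFunction_apply_self one_ne_zero hinv, ?_⟩
  filter_upwards [(hf.contDiffAt_implicitFunction one_ne_zero hinv).eventually (by simp),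
    hf.eventually_apply_implicitFunction one_ne_zero hinv] with x hdiff hzero
  exact ⟨hdiff.differentiableAt one_ne_zero, hzero.trans hfu⟩

theorem exists_eventually_injective_roots {𝕜 ι : Type*} [RCLike 𝕜] [Finite ι]
    {f : 𝕜 × 𝕜 → 𝕜} (hf : ContDiff 𝕜 1 f) {x₀ : 𝕜} {w : ι → 𝕜} (hw : Injective w)
    (hroot : ∀ j, f (x₀, w j) = 0) (hsimple : ∀ j, deriv (fun y => f (x₀, y)) (w j) ≠ 0) :
    ∃ z : ι → 𝕜 → 𝕜, ∀ᶠ x in 𝓝 x₀,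
      Injective (z · x) ∧ ∀ j, DifferentiableAt 𝕜 (z j) x ∧ f (x, z j x) = 0 := by
  choose z hz₀ hz using fun j => hf.contDiffAt.exists_eventually_eq_zero (hroot j) (hsimple j)
  have hsep : ∀ j k, ∀ᶠ x in 𝓝 x₀, z j x = z k x → j = k := by
    intro j k
    by_cases hjk : j = k
    · exact .of_forall fun _ _ => hjk
    have hcont : ∀ j, ContinuousAt (z j) x₀ := fun j => (hz j).self_of_nhds.1.continuousAt
    have hne : z j x₀ - z k x₀ ≠ 0 := by
      rw [hz₀, hz₀]
      exact sub_ne_zero.2 (hw.ne hjk)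
    filter_upwards [((hcont j).sub (hcont k)).eventually_ne hne] with x hx h
    exact absurd (sub_eq_zero.2 h) hx
  refine ⟨z, ?_⟩
  filter_upwards [eventually_all.2 fun j => eventually_all.2 (hsep j), eventually_all.2 hz]
    with x hsep hz
  exact ⟨fun j k => hsep j k, hz⟩

theorem Multiset.exists_injective_fin_of_nodup {α : Type*} {s : Multiset α} (hs : s.Nodup)
    {n : ℕ} (hn : Multiset.card s = n) : ∃ w : Fin n → α, Injective w ∧ ∀ j, w j ∈ s := by
  classical
  let e := Finset.equivFinOfCardEq (s := s.toFinset)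
    (by rw [Multiset.toFinset_card_of_nodup hs, hn])
  exact ⟨fun j => e.symm j, fun i j h => e.symm.injective (Subtype.ext h),
    fun j => Multiset.mem_toFinset.1 (e.symm j).2⟩

theorem Finset.sum_sum_eq_zero_of_antisymm {M ι : Type*} [AddCommGroup M] [IsAddTorsionFree M]
    (s : Finset ι) {T : ι → ι → M} (hT : ∀ k l, T l k = -T k l) :
    ∑ k ∈ s, ∑ l ∈ s, T k l = 0 := by
  have hswap : ∑ l ∈ s, ∑ k ∈ s, T k l = -∑ l ∈ s, ∑ k ∈ s, T l k := by
    simp only [← sum_neg_distrib]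
    exact sum_congr rfl fun l _ => sum_congr rfl fun k _ => hT l k
  exact self_eq_neg.1 (sum_comm.trans hswap)

section RootVelocity

variable {K ι : Type*} [Field K] [Fintype ι] [DecidableEq ι]

def rootVelocity (a : ι → K) (j : ι) : K :=
  ∑ k ∈ univ.erase j, (a j - a k)⁻¹

/-- The `l = k` term on the right is `0⁻¹ = 0`; it is kept so that `k` and `l` range over the
same set. -/
theorem rootVelocity_sub_div_sq {a : ι → K} (ha : Injective a) {j k : ι} (hkj : k ≠ j) :
    (rootVelocity a j - rootVelocity a k) / (a j - a k) ^ 2 =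
      2 * ((a j - a k) ^ 3)⁻¹ -
        ∑ l ∈ univ.erase j, ((a j - a k) * (a j - a l) * (a k - a l))⁻¹ := by
  have hd : ∀ {k l}, k ≠ l → a k - a l ≠ 0 := fun h => sub_ne_zero.2 (ha.ne h)
  have hk : k ∈ univ.erase j := mem_erase.2 ⟨hkj, mem_univ k⟩
  have hj : j ∈ univ.erase k := mem_erase.2 ⟨hkj.symm, mem_univ j⟩
  have hl : ∀ l ∈ (univ.erase j).erase k, ((a j - a l)⁻¹ - (a k - a l)⁻¹) / (a j - a k) ^ 2 =
      -((a j - a k) * (a j - a l) * (a k - a l))⁻¹ := by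
    intro l hl
    have hlk : l ≠ k := ne_of_mem_erase hl
    have hlj : l ≠ j := ne_of_mem_erase (mem_of_mem_erase hl)
    field_simp [hd hkj.symm, hd hlj.symm, hd hlk.symm]
    ring
  rw [rootVelocity, rootVelocity, ← add_sum_erase _ _ hk, ← add_sum_erase _ _ hj,
    erase_right_comm (s := univ) (a := k) (b := j), ← add_sum_erase _ _ hk,
    show ∀ x y z w : K, (x + y - (z + w)) / (a j - a k) ^ 2 =
      (x - z) / (a j - a k) ^ 2 + (y - w) / (a j - a k) ^ 2 by intros; ring,
    ← sum_sub_distrib, sum_div, sum_congr rfl hl, sum_neg_distrib, sub_self, mul_zero, inv_zero,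
    zero_add]
  field_simp [hd hkj.symm, hd hkj]
  ring

theorem sum_rootVelocity_sub_div_sq [CharZero K] {a : ι → K} (ha : Injective a) (j : ι) :
    ∑ k ∈ univ.erase j, (rootVelocity a j - rootVelocity a k) / (a j - a k) ^ 2 =
      2 * ∑ k ∈ univ.erase j, ((a j - a k) ^ 3)⁻¹ := by
  rw [sum_congr rfl fun k hk => rootVelocity_sub_div_sq ha (ne_of_mem_erase hk), sum_sub_distrib,
    sum_sum_eq_zero_of_antisymm _ fun k l => by rw [← inv_neg]; ring_nf, ← mul_sum, sub_zero]

theorem deriv_deriv_eq_of_hasDerivAt_rootVelocity {𝕜 : Type*} [NontriviallyNormedField 𝕜]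
    [CharZero 𝕜] {z : ι → 𝕜 → 𝕜} {τ : 𝕜}
    (hz : ∀ᶠ σ in 𝓝 τ, ∀ j, HasDerivAt (z j) (rootVelocity (z · σ) j) σ)
    (hinj : Injective (z · τ)) (j : ι) :
    deriv (deriv (z j)) τ = -2 * ∑ k ∈ univ.erase j, ((z j τ - z k τ) ^ 3)⁻¹ := by
  have hvel : HasDerivAt (fun σ => rootVelocity (z · σ) j)
      (∑ k ∈ univ.erase j, -(rootVelocity (z · τ) j - rootVelocity (z · τ) k) /
        (z j τ - z k τ) ^ 2) τ :=
    HasDerivAt.fun_sum fun k hk => ((hz.self_of_nhds j).sub (hz.self_of_nhds k)).inv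
      (sub_ne_zero.2 (hinj.ne (ne_of_mem_erase hk).symm))
  have hderiv : deriv (z j) =ᶠ[𝓝 τ] fun σ => rootVelocity (z · σ) j :=
    hz.mono fun σ h => (h j).deriv
  rw [hderiv.deriv_eq, hvel.deriv]
  simp only [neg_div, sum_neg_distrib]
  rw [sum_rootVelocity_sub_div_sq hinj, neg_mul_eq_neg_mul]

end RootVelocity

section Nodal

variable {K ι : Type*} [Field K]

theorem eval_derivative_nodal_of_forall_ne [DecidableEq ι] {s : Finset ι} {v : ι → K} {x : K}
    (hx : ∀ i ∈ s, x ≠ v i) :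
    (derivative (nodal s v)).eval x = (nodal s v).eval x * ∑ i ∈ s, (x - v i)⁻¹ := by
  rw [derivative_nodal, eval_finsetSum, mul_sum]
  refine sum_congr rfl fun i hi => ?_
  rw [eval_nodal, eval_nodal, ← mul_prod_erase s (fun j => x - v j) hi, mul_comm (x - v i),
    mul_assoc, mul_inv_cancel₀ (sub_ne_zero.2 (hx i hi)), mul_one]

theorem eval_derivative_derivative_nodal_node [DecidableEq ι] {s : Finset ι} {v : ι → K}
    (hv : Set.InjOn v s) {i : ι} (hi : i ∈ s) :
    (derivative (derivative (nodal s v))).eval (v i) =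
      2 * (derivative (nodal s v)).eval (v i) * ∑ k ∈ s.erase i, (v i - v k)⁻¹ := by
  have hne : ∀ k ∈ s.erase i, v i ≠ v k := fun k hk h =>
    (mem_erase.1 hk).1 (hv (mem_of_mem_erase hk) hi h.symm)
  rw [eval_nodal_derivative_eval_node_eq hi, mul_assoc, ← eval_derivative_nodal_of_forall_ne hne,
    nodal_eq_mul_nodal_erase hi]
  simp [derivative_mul]
  ring

theorem eval_derivative_nodal_node_ne_zero [DecidableEq ι] {s : Finset ι} {v : ι → K}
    (hv : Set.InjOn v s) {i : ι} (hi : i ∈ s) : (derivative (nodal s v)).eval (v i) ≠ 0 := by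
  rw [eval_nodal_derivative_eval_node_eq hi]
  exact eval_nodal_not_at_node fun k hk h =>
    (mem_erase.1 hk).1 (hv (mem_of_mem_erase hk) hi h.symm)

variable [Fintype ι] {q : K[X]} {a : ι → K}

theorem eq_C_leadingCoeff_mul_nodal (ha : Injective a) (hroot : ∀ i, q.IsRoot (a i))
    (hdeg : q.natDegree = Fintype.card ι) : q = C q.leadingCoeff * nodal univ a := by
  rcases eq_or_ne q 0 with rfl | hq
  · simp
  have hroots : q.roots = univ.val.map a := by
    refine (Multiset.eq_of_le_of_card_le ((Multiset.le_iff_subset (univ.nodup.map ha)).2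
      fun x hx => ?_) ?_).symm
    · obtain ⟨i, -, rfl⟩ := Multiset.mem_map.1 hx
      exact (mem_roots hq).2 (hroot i)
    · rw [Multiset.card_map, card_val, card_univ, ← hdeg]
      exact card_roots' q
  conv_lhs => rw [← C_leadingCoeff_mul_prod_multiset_X_sub_C (p := q)
    (by rw [hroots, Multiset.card_map, card_val, card_univ, hdeg])]
  rw [hroots, Multiset.map_map, nodal]
  rfl

theorem isRoot_iff_of_injective_roots (hq : q ≠ 0) (ha : Injective a)
    (hroot : ∀ i, q.IsRoot (a i)) (hdeg : q.natDegree = Fintype.card ι) (x : K) :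
    q.IsRoot x ↔ ∃ i, a i = x := by
  rw [eq_C_leadingCoeff_mul_nodal ha hroot hdeg]
  simp only [IsRoot.def, eval_mul, eval_C, eval_nodal, mul_eq_zero, leadingCoeff_ne_zero.2 hq,
    false_or, prod_eq_zero_iff, Finset.mem_univ, true_and, sub_eq_zero]
  exact exists_congr fun i => eq_comm

variable [DecidableEq ι]

theorem eval_derivative_ne_zero_of_injective_roots (ha : Injective a)
    (hroot : ∀ i, q.IsRoot (a i)) (hdeg : q.natDegree = Fintype.card ι) (i : ι) :
    (derivative q).eval (a i) ≠ 0 := by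
  have hq : q ≠ 0 := by
    rintro rfl
    exact (Fintype.card_pos_iff.2 ⟨i⟩).ne' (by rw [← hdeg, natDegree_zero])
  rw [eq_C_leadingCoeff_mul_nodal ha hroot hdeg, derivative_C_mul, eval_mul, eval_C]
  exact mul_ne_zero (leadingCoeff_ne_zero.2 hq)
    (eval_derivative_nodal_node_ne_zero ha.injOn (mem_univ i))

theorem eval_derivative_derivative_of_injective_roots (ha : Injective a)
    (hroot : ∀ i, q.IsRoot (a i)) (hdeg : q.natDegree = Fintype.card ι) (i : ι) :
    (derivative (derivative q)).eval (a i) = 2 * (derivative q).eval (a i) * rootVelocity a i := by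
  rw [eq_C_leadingCoeff_mul_nodal ha hroot hdeg]
  simp only [derivative_C_mul, eval_mul, eval_C,
    eval_derivative_derivative_nodal_node ha.injOn (mem_univ i), rootVelocity]
  ring

end Nodal

theorem polyHeatFlow_eq_sum_range (p : ℂ[X]) (τ : ℂ) {n : ℕ} (hn : p.natDegree < 2 * n) :
    polyHeatFlow p τ =
      ∑ k ∈ range n, C (1 / (k.factorial : ℂ) * (-τ / 2) ^ k) * derivative^[2 * k] p := by
  let f : ℕ → ℂ[X] := fun k => C (1 / (k.factorial : ℂ) * (-τ / 2) ^ k) * derivative^[2 * k] p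
  have hf : ∀ m, p.natDegree < 2 * m →
      ∑ k ∈ range m, f k = ∑ k ∈ range (p.natDegree / 2 + 1), f k := fun m hm =>
    eventually_constant_sum (fun k hk => by
      simp only [f, iterate_derivative_eq_zero (by omega : p.natDegree < 2 * k), mul_zero])
      (by omega)
  exact (hf _ (by omega)).trans (hf n hn).symm

theorem derivative_polyHeatFlow (p : ℂ[X]) (τ : ℂ) :
    derivative (polyHeatFlow p τ) = polyHeatFlow (derivative p) τ := by
  rw [polyHeatFlow_eq_sum_range (derivative p) τ (n := p.natDegree + 1)
    ((natDegree_derivative_le p).trans_lt (by omega)), polyHeatFlow, map_sum]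
  refine sum_congr rfl fun k _ => ?_
  rw [derivative_C_mul, ← Function.iterate_succ_apply' derivative, Function.iterate_succ_apply]

theorem coeff_polyHeatFlow_natDegree (p : ℂ[X]) (τ : ℂ) :
    (polyHeatFlow p τ).coeff p.natDegree = p.leadingCoeff := by
  rw [polyHeatFlow, finsetSum_coeff, sum_eq_single 0 (fun k _ hk => ?_) (by simp)]
  · simp
  · rw [coeff_C_mul, coeff_iterate_derivative,
      coeff_eq_zero_of_natDegree_lt (by omega : p.natDegree < p.natDegree + 2 * k)]
    simp

theorem natDegree_polyHeatFlow_le (p : ℂ[X]) (τ : ℂ) :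
    (polyHeatFlow p τ).natDegree ≤ p.natDegree :=
  natDegree_sum_le_of_forall_le _ _ fun _ _ =>
    (natDegree_C_mul_le _ _).trans ((natDegree_iterate_derivative p _).trans (Nat.sub_le _ _))

theorem natDegree_polyHeatFlow (p : ℂ[X]) (τ : ℂ) :
    (polyHeatFlow p τ).natDegree = p.natDegree := by
  rcases eq_or_ne p 0 with rfl | hp
  · simp [polyHeatFlow]
  · exact natDegree_eq_of_le_of_coeff_ne_zero (natDegree_polyHeatFlow_le p τ)
      (by rwa [coeff_polyHeatFlow_natDegree, leadingCoeff_ne_zero])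

theorem contDiff_eval_polyHeatFlow (p : ℂ[X]) {n : WithTop ℕ∞} :
    ContDiff ℂ n fun x : ℂ × ℂ => (polyHeatFlow p x.1).eval x.2 := by
  simp only [polyHeatFlow, eval_finsetSum, eval_mul, eval_C]
  exact ContDiff.sum fun k _ => (contDiff_const.mul ((contDiff_fst.neg.div_const 2).pow k)).mul
    ((Polynomial.differentiable _).contDiff.comp contDiff_snd)

theorem hasDerivAt_inv_factorial_mul_neg_half_pow_succ (k : ℕ) (τ : ℂ) :
    HasDerivAt (fun σ : ℂ => 1 / ((k + 1).factorial : ℂ) * (-σ / 2) ^ (k + 1))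
      (-(1 / 2) * (1 / (k.factorial : ℂ) * (-τ / 2) ^ k)) τ := by
  refine (((hasDerivAt_neg τ).div_const 2).pow (k + 1) |>.const_mul _).congr_deriv ?_
  rw [Nat.factorial_succ]
  push_cast
  field_simp

theorem hasDerivAt_eval_polyHeatFlow (p : ℂ[X]) (z τ : ℂ) :
    HasDerivAt (fun σ => (polyHeatFlow p σ).eval z)
      (-(1 / 2) * (derivative (derivative (polyHeatFlow p τ))).eval z) τ := by
  have hsplit : (fun σ => (polyHeatFlow p σ).eval z) = fun σ =>
      ∑ k ∈ range (p.natDegree + 1), 1 / ((k + 1).factorial : ℂ) * (-σ / 2) ^ (k + 1) *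
        (derivative^[2 * (k + 1)] p).eval z + p.eval z := by
    funext σ
    rw [polyHeatFlow_eq_sum_range p σ (n := p.natDegree + 2) (by omega), eval_finsetSum,
      sum_range_succ']
    simp
  have hD2 : (derivative (derivative p)).natDegree < 2 * (p.natDegree + 1) := by
    have := natDegree_derivative_le (derivative p)
    have := natDegree_derivative_le p
    omega
  rw [hsplit, derivative_polyHeatFlow, derivative_polyHeatFlow,
    polyHeatFlow_eq_sum_range _ τ hD2, eval_finsetSum, mul_sum]
  refine ((HasDerivAt.fun_sum fun k _ =>
    (hasDerivAt_inv_factorial_mul_neg_half_pow_succ k τ).mul_const ((derivative^[2 * (k + 1)] p).eval z)).add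
    (hasDerivAt_const τ _)).congr_deriv ?_
  rw [add_zero]
  refine sum_congr rfl fun k _ => ?_
  rw [eval_mul, eval_C, show 2 * (k + 1) = 2 * k + 1 + 1 by ring, Function.iterate_succ_apply,
    Function.iterate_succ_apply]
  ring

theorem hasDerivAt_rootVelocity_of_polyHeatFlow {ι : Type*} [Fintype ι] [DecidableEq ι]
    {p : ℂ[X]} (hdeg : p.natDegree = Fintype.card ι) {z : ι → ℂ → ℂ} {τ : ℂ}
    (hz : ∀ᶠ σ in 𝓝 τ, ∀ j, DifferentiableAt ℂ (z j) σ ∧ (polyHeatFlow p σ).IsRoot (z j σ))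
    (hinj : Injective (z · τ)) (j : ι) :
    HasDerivAt (z j) (rootVelocity (z · τ) j) τ := by
  have hroot : ∀ k, (polyHeatFlow p τ).IsRoot (z k τ) := fun k => (hz.self_of_nhds k).2
  have hdegτ : (polyHeatFlow p τ).natDegree = Fintype.card ι := by
    rw [natDegree_polyHeatFlow, hdeg]
  have hsimple := eval_derivative_ne_zero_of_injective_roots hinj hroot hdegτ j
  refine (hasDerivAt_of_eventually_eq_zero (f := fun x : ℂ × ℂ => (polyHeatFlow p x.1).eval x.2)
    ((contDiff_eval_polyHeatFlow p).differentiable one_ne_zero _)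
    (hasDerivAt_eval_polyHeatFlow p (z j τ) τ) ((polyHeatFlow p τ).hasDerivAt (z j τ)) hsimple
    (hz.self_of_nhds j).1 (hz.mono fun σ h => (h j).2)).congr_deriv ?_
  rw [eval_derivative_derivative_of_injective_roots hinj hroot hdegτ]
  field_simp

/-- if `e^{-σ₀D²/2}p` has `N = deg p` distinct roots, then locally in `τ` the roots
can be followed holomorphically, satisfy `z_j' = ∑_{k≠j} 1/(z_j - z_k)`, and consequently the
rational Calogero--Moser equations `z_j'' = -2 ∑_{k≠j} 1/(z_j - z_k)³`. -/
theorem poly_heat_flow_roots_ode (p : Polynomial ℂ) (N : ℕ) (hN : 1 ≤ N)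
    (hdeg : p.natDegree = N) (σ₀ : ℂ)
    (hsimple : (polyHeatFlow p σ₀).roots.Nodup)
    (hcard : Multiset.card (polyHeatFlow p σ₀).roots = N) :
    ∃ r > (0 : ℝ), ∃ z : Fin N → ℂ → ℂ,
      (∀ j, DifferentiableOn ℂ (z j) (Metric.ball σ₀ r)) ∧
      ∀ τ ∈ Metric.ball σ₀ r,
        (∀ j k : Fin N, j ≠ k → z j τ ≠ z k τ) ∧
        (∀ w : ℂ, (polyHeatFlow p τ).IsRoot w ↔ ∃ j, z j τ = w) ∧
        (∀ j, deriv (z j) τ = ∑ k ∈ Finset.univ.erase j, (z j τ - z k τ)⁻¹) ∧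
        (∀ j, deriv (deriv (z j)) τ = -2 * ∑ k ∈ Finset.univ.erase j, ((z j τ - z k τ) ^ 3)⁻¹) := by
  have hdeg' : p.natDegree = Fintype.card (Fin N) := by rw [hdeg, Fintype.card_fin]
  have hdegτ : ∀ τ, (polyHeatFlow p τ).natDegree = Fintype.card (Fin N) := fun τ => by
    rw [natDegree_polyHeatFlow, hdeg']
  obtain ⟨w, hw, hw_mem⟩ := Multiset.exists_injective_fin_of_nodup hsimple hcard
  have hw_root : ∀ j, (polyHeatFlow p σ₀).IsRoot (w j) := fun j => isRoot_of_mem_roots (hw_mem j)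
  obtain ⟨z, hz⟩ := exists_eventually_injective_roots (contDiff_eval_polyHeatFlow p) hw hw_root
    fun j => by
      simpa only [Polynomial.deriv] using
        eval_derivative_ne_zero_of_injective_roots hw hw_root (hdegτ σ₀) j
  obtain ⟨r, hr, hball⟩ := Metric.eventually_nhds_iff_ball.1 hz
  have hvel : ∀ τ ∈ ball σ₀ r, ∀ j, HasDerivAt (z j) (rootVelocity (z · τ) j) τ :=
    fun τ hτ => hasDerivAt_rootVelocity_of_polyHeatFlow hdeg'
      (eventually_of_mem (isOpen_ball.mem_nhds hτ) fun σ hσ => (hball σ hσ).2) (hball τ hτ).1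
  refine ⟨r, hr, z, fun j τ hτ => (hvel τ hτ j).differentiableAt.differentiableWithinAt,
    fun τ hτ => ?_⟩
  obtain ⟨hinj, hroot⟩ := hball τ hτ
  have hne : polyHeatFlow p τ ≠ 0 :=
    ne_zero_of_natDegree_gt (n := 0) (by rw [hdegτ, Fintype.card_fin]; omega)
  exact ⟨fun j k => hinj.ne,
    isRoot_iff_of_injective_roots hne hinj (fun j => (hroot j).2) (hdegτ τ),
    fun j => (hvel τ hτ j).deriv,
    deriv_deriv_eq_of_hasDerivAt_rootVelocity
      (eventually_of_mem (isOpen_ball.mem_nhds hτ) hvel) hinj⟩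

end
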